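/- arXiv:2502.05579 — 2 statements merged into one kernel-verified Lean document; each statement's English description precedes it below -/
import Mathlib

section
/- Let V = f'(φ), let ℒ = ∂_x(-∂_x²+1-V), so that ℒu = λu is the third-order ODE y''' - y' + V'y + Vy' + λy = 0, and let ℒ* = -(-∂_x² + 1 - V)∂_x. If Y = (f_j, f_j', f_j'')ᵀ satisfies the companion system of ℒu = λu and Z = (z₁,z₂,z₃)ᵀ solves the dual system, then z₃ satisfies ℒ* z₃ = λ z₃. -/
theorem stmt15 (V : ℝ → ℝ) (hV : ContDiff ℝ (⊤ : ℕ∞) V) (lam : ℂ) (Z : ℝ → Fin 3 → ℂ)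
    (hZ : ∀ x : ℝ, HasDerivAt Z
      (-((Matrix.transpose
          !![(0 : ℂ), 1, 0;
             0, 0, 1;
             -lam - Complex.ofReal (deriv V x), 1 - Complex.ofReal (V x), 0]).mulVec (Z x))) x) :
    ∀ x : ℝ,
      deriv (deriv (deriv (fun t => Z t 2))) x - deriv (fun t => Z t 2) x
        + (V x : ℂ) * deriv (fun t => Z t 2) x = lam * Z x 2 := by
  have hT : ∀ (a b : ℂ), Matrix.transpose !![(0:ℂ),1,0; 0,0,1; -lam-a,1-b,0]
      = !![(0:ℂ),0,-lam-a; 1,0,1-b; 0,1,0] := by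
    intro a b; ext i j; fin_cases i <;> fin_cases j <;> simp
  have key : ∀ (i : Fin 3) (x : ℝ), HasDerivAt (fun t => Z t i)
      ((-((Matrix.transpose
          !![(0 : ℂ), 1, 0;
             0, 0, 1;
             -lam - Complex.ofReal (deriv V x), 1 - Complex.ofReal (V x), 0]).mulVec (Z x))) i) x :=
    fun i x => (hasDerivAt_pi.1 (hZ x)) i
  have h0 : ∀ x : ℝ, HasDerivAt (fun t => Z t 0)
      ((lam + Complex.ofReal (deriv V x)) * Z x 2) x := by
    intro x
    have := key 0 x
    convert this using 1
    rw [hT]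
    simp [Matrix.mulVec, dotProduct, Fin.sum_univ_three]
    ring
  have h1 : ∀ x : ℝ, HasDerivAt (fun t => Z t 1)
      (-Z x 0 - (1 - (V x : ℂ)) * Z x 2) x := by
    intro x
    have := key 1 x
    convert this using 1
    rw [hT]
    simp [Matrix.mulVec, dotProduct, Fin.sum_univ_three]
    ring
  have h2 : ∀ x : ℝ, HasDerivAt (fun t => Z t 2) (-Z x 1) x := by
    intro x
    have := key 2 x
    convert this using 1
    rw [hT]
    simp [Matrix.mulVec, dotProduct, Fin.sum_univ_three]
  have hVc : ∀ x : ℝ, HasDerivAt (fun t : ℝ => (V t : ℂ)) (Complex.ofReal (deriv V x)) x := by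
    intro x
    exact ((hV.differentiable (by simp) x).hasDerivAt).ofReal_comp
  have d1 : deriv (fun t => Z t 2) = fun x => -Z x 1 := funext fun x => (h2 x).deriv
  have d2 : deriv (deriv (fun t => Z t 2)) = fun x => Z x 0 + (1 - (V x : ℂ)) * Z x 2 := by
    rw [d1]
    funext x
    rw [((h1 x).fun_neg).deriv]
    ring
  intro x
  have h3 : HasDerivAt (fun x => Z x 0 + (1 - (V x : ℂ)) * Z x 2)
      ((lam + Complex.ofReal (deriv V x)) * Z x 2
        + ((-Complex.ofReal (deriv V x)) * Z x 2 + (1 - (V x : ℂ)) * (-Z x 1))) x := by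
    exact (h0 x).add ((((hVc x).const_sub 1)).mul (h2 x))
  rw [d2, h3.deriv, d1]
  ring
end

section
/- The operator L_+∂_x (and hence ℒ = ∂_x L_+) has no eigenvalue in iℝ \ {0}: if L_+∂_x ψ = iλψ with λ ∈ ℝ \ {0} and ψ exponentially decaying, then ψ = 0. -/
open Real Filter Complex Topology

private lemma reD {f : ℝ → ℂ} {f' : ℂ} {x : ℝ} (h : HasDerivAt f f' x) :
    HasDerivAt (fun y => (f y).re) f'.re x := by
  exact (Complex.reCLM.hasFDerivAt).comp_hasDerivAt x h

private lemma imD {f : ℝ → ℂ} {f' : ℂ} {x : ℝ} (h : HasDerivAt f f' x) :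
    HasDerivAt (fun y => (f y).im) f'.im x := by
  exact (Complex.imCLM.hasFDerivAt).comp_hasDerivAt x h

private lemma reprod_le (a b : ℂ) : |a.re * b.re + a.im * b.im| ≤ ‖a‖ * ‖b‖ := by
  have h := Complex.abs_re_le_norm ((starRingEnd ℂ) a * b)
  rw [norm_mul, Complex.norm_conj] at h
  have h2 : ((starRingEnd ℂ) a * b).re = a.re * b.re + a.im * b.im := by
    simp [Complex.mul_re]
  rw [h2] at h
  simpa using h

private lemma bnd {c bc : ℝ} (hc : |c| ≤ bc) (u v : ℂ) {bu bv : ℝ}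
    (hu : ‖u‖ ≤ bu) (hv : ‖v‖ ≤ bv) (hbu : 0 ≤ bu) :
    |c * (u.re * v.re + u.im * v.im)| ≤ bc * (bu * bv) := by
  rw [abs_mul]
  exact mul_le_mul hc ((reprod_le u v).trans
    (mul_le_mul hu hv (norm_nonneg _) hbu)) (abs_nonneg _) ((abs_nonneg c).trans hc)

/-- The gKdV soliton profile `φ(x) = ((p+1)/2)^{1/(p-1)} · sech^{2/(p-1)}((p-1)x/2)`. -/
noncomputable def phi (p : ℝ) : ℝ → ℝ :=
  fun x => ((p + 1) / 2) ^ (1 / (p - 1)) * Real.cosh ((p - 1) * x / 2) ^ (-(2 / (p - 1)))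

private lemma phi_rpow {p : ℝ} (hp1 : 1 < p) (x : ℝ) :
    phi p x ^ (p - 1) = (p + 1) / 2 / Real.cosh ((p - 1) * x / 2) ^ 2 := by
  have hA : (0:ℝ) < (p + 1) / 2 := by linarith
  have hch := Real.cosh_pos ((p - 1) * x / 2)
  have hp1' : p - 1 ≠ 0 := by linarith
  unfold phi
  rw [Real.mul_rpow (Real.rpow_pos_of_pos hA _).le (Real.rpow_pos_of_pos hch _).le,
    ← Real.rpow_mul hA.le, ← Real.rpow_mul hch.le]
  rw [show 1 / (p - 1) * (p - 1) = 1 by field_simp, show -(2 / (p - 1)) * (p - 1) = -2 by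
    field_simp]
  rw [Real.rpow_one, show (-2 : ℝ) = -((2:ℕ):ℝ) by norm_num, Real.rpow_neg hch.le,
    Real.rpow_natCast]
  ring

/-- The operator `L_+ = -∂_x² + 1 - p φ^{p-1}` acting on complex-valued functions. -/
noncomputable def Lop (p : ℝ) (u : ℝ → ℂ) : ℝ → ℂ :=
  fun x => -(deriv (deriv u) x) + u x - (p : ℂ) * ((phi p x ^ (p - 1) : ℝ) : ℂ) * u x

/-- A smooth function that decays exponentially together with all its derivatives. -/
def ExpDecay (ψ : ℝ → ℂ) : Prop :=
  ContDiff ℝ (⊤ : ℕ∞) ψ ∧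
    ∀ n : ℕ, ∃ C a : ℝ, 0 < a ∧ ∀ x : ℝ, ‖iteratedDeriv n ψ x‖ ≤ C * Real.exp (-a * |x|)

set_option maxHeartbeats 2000000 in
/-- `L_+∂_x` (hence `ℒ = ∂_x L_+`) has no eigenvalue in `iℝ \ {0}`. -/
theorem stmt18 (p : ℝ) (hp1 : 1 < p) (hp5 : p < 5) (lam : ℝ) (hlam : lam ≠ 0)
    (ψ : ℝ → ℂ) (hψ : ExpDecay ψ)
    (heig : ∀ x : ℝ, Lop p (deriv ψ) x = Complex.I * lam * ψ x) :
    ψ = 0 := by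
  obtain ⟨hsm, hdec⟩ := hψ
  have hC' : ContDiff ℝ ((⊤ : ℕ∞) : WithTop ℕ∞) ψ := hsm.of_le (by simp)
  obtain ⟨hdiff0, hC1⟩ := contDiff_infty_iff_deriv.mp hC'
  obtain ⟨hdiff1, hC2⟩ := contDiff_infty_iff_deriv.mp hC1
  obtain ⟨hdiff2, -⟩ := contDiff_infty_iff_deriv.mp hC2
  -- the function m = tanh((p-1)x/2)
  set m : ℝ → ℝ := fun y => Real.sinh ((p-1)*y/2) / Real.cosh ((p-1)*y/2) with hmdef
  have hm : ∀ x : ℝ, HasDerivAt m ((p-1)/2 * (1 - m x ^ 2)) x := by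
    intro x
    have hch := Real.cosh_pos ((p-1)*x/2)
    have hu : HasDerivAt (fun y : ℝ => (p-1)*y/2) ((p-1)/2) x := by
      simpa using ((hasDerivAt_id x).const_mul (p-1)).div_const 2
    have hs : HasDerivAt (fun y : ℝ => Real.sinh ((p-1)*y/2))
        (Real.cosh ((p-1)*x/2) * ((p-1)/2)) x := (Real.hasDerivAt_sinh _).comp x hu
    have hc : HasDerivAt (fun y : ℝ => Real.cosh ((p-1)*y/2))
        (Real.sinh ((p-1)*x/2) * ((p-1)/2)) x := (Real.hasDerivAt_cosh _).comp x hu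
    have hdiv := hs.div hc hch.ne'
    refine hdiv.congr_deriv ?_
    have hid : Real.cosh ((p-1)*x/2) * ((p - 1) / 2) * Real.cosh ((p-1)*x/2) -
        Real.sinh ((p-1)*x/2) * (Real.sinh ((p-1)*x/2) * ((p - 1) / 2)) = (p-1)/2 := by
      have hcs := Real.cosh_sq_sub_sinh_sq ((p-1)*x/2)
      nlinarith [hcs]
    rw [hid]
    have h1c : 1 - m x ^ 2 = 1 / Real.cosh ((p-1)*x/2) ^ 2 := by
      simp only [hmdef]
      rw [div_pow, Real.sinh_sq]
      field_simp
      ring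
    rw [h1c]
    ring
  have hm2 : ∀ x : ℝ, m x ^ 2 < 1 := by
    intro x
    have hch := Real.cosh_pos ((p-1)*x/2)
    have hs2 := Real.sinh_sq ((p-1)*x/2)
    simp only [hmdef]
    rw [div_pow, hs2, div_lt_one (by positivity)]
    linarith
  have hm1 : ∀ x : ℝ, |m x| ≤ 1 := by
    intro x
    nlinarith [_root_.sq_abs (m x), abs_nonneg (m x), hm2 x]
  have hq : ∀ x : ℝ, phi p x ^ (p - 1) = (p + 1) / 2 * (1 - m x ^ 2) := by
    intro x
    have hch := Real.cosh_pos ((p-1)*x/2)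
    have hs2 := Real.sinh_sq ((p-1)*x/2)
    rw [phi_rpow hp1 x]
    simp only [hmdef]
    rw [div_pow, hs2]
    field_simp
    ring
  -- the eigenvalue equation for the third derivative
  have h3 : ∀ x : ℝ, deriv (deriv (deriv ψ)) x
      = deriv ψ x - (p:ℂ) * ((((p+1)/2 * (1 - m x ^ 2) : ℝ)) : ℂ) * deriv ψ x
        - Complex.I * lam * ψ x := by
    intro x
    have h := heig x
    simp only [Lop] at h
    rw [hq x] at h
    linear_combination -h
  -- the virial function G and the quadratic form S
  set S : ℝ → ℝ := fun y =>
      ((deriv ψ y).re + m y * (ψ y).re)^2 + ((deriv ψ y).im + m y * (ψ y).im)^2 with hSdef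
  set G : ℝ → ℝ := fun y =>
      -(m y) * ((ψ y).re * (deriv (deriv ψ) y).re + (ψ y).im * (deriv (deriv ψ) y).im)
      + m y / 2 * ((deriv ψ y).re * (deriv ψ y).re + (deriv ψ y).im * (deriv ψ y).im)
      + (p - 1) / 2 * (1 - m y ^ 2) *
          ((ψ y).re * (deriv ψ y).re + (ψ y).im * (deriv ψ y).im)
      + m y ^ 3 / 2 * ((ψ y).re * (ψ y).re + (ψ y).im * (ψ y).im) with hGdef
  have key : ∀ x : ℝ, HasDerivAt G (3*(p-1)/4 * (1 - m x ^ 2) * S x) x := by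
    intro x
    have hmx := hm x
    have hd0 : HasDerivAt ψ (deriv ψ x) x := (hdiff0 x).hasDerivAt
    have hd1 : HasDerivAt (deriv ψ) (deriv (deriv ψ) x) x := (hdiff1 x).hasDerivAt
    have hd2 : HasDerivAt (deriv (deriv ψ)) (deriv (deriv (deriv ψ)) x) x :=
      (hdiff2 x).hasDerivAt
    have har := reD hd0
    have hai := imD hd0
    have hbr := reD hd1
    have hbi := imD hd1
    have hdr := reD hd2
    have hdi := imD hd2
    have H1 := (har.mul hdr).add (hai.mul hdi)
    have H2 := (hbr.mul hbr).add (hbi.mul hbi)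
    have H3 := (har.mul hbr).add (hai.mul hbi)
    have H4 := (har.mul har).add (hai.mul hai)
    have T1 := hmx.neg.mul H1
    have T2 := (hmx.div_const 2).mul H2
    have T3 := (((hasDerivAt_const x (1:ℝ)).sub (hmx.pow 2)).const_mul ((p-1)/2)).mul H3
    have T4 := ((hmx.pow 3).div_const 2).mul H4
    have Htot := ((T1.add T2).add T3).add T4
    have h3re : (deriv (deriv (deriv ψ)) x).re
        = (1 - p * ((p+1)/2 * (1 - m x ^ 2))) * (deriv ψ x).re + lam * (ψ x).im := by
      rw [h3 x]
      simp only [Complex.sub_re, Complex.mul_re, Complex.mul_im, Complex.I_re, Complex.I_im,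
        Complex.ofReal_re, Complex.ofReal_im]
      ring
    have h3im : (deriv (deriv (deriv ψ)) x).im
        = (1 - p * ((p+1)/2 * (1 - m x ^ 2))) * (deriv ψ x).im - lam * (ψ x).re := by
      rw [h3 x]
      simp only [Complex.sub_im, Complex.mul_re, Complex.mul_im, Complex.I_re, Complex.I_im,
        Complex.ofReal_re, Complex.ofReal_im]
      ring
    refine Htot.congr_deriv ?_
    simp only [hSdef]
    rw [h3re, h3im]
    push_cast
    simp only [Pi.add_apply, Pi.mul_apply, Pi.pow_apply, Pi.sub_apply, Pi.neg_apply]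
    ring
  -- G is monotone
  have hgpos : ∀ x : ℝ, 0 ≤ 3*(p-1)/4 * (1 - m x ^ 2) * S x := by
    intro x
    have h1 : 0 ≤ S x := by simp only [hSdef]; positivity
    have h2 := hm2 x
    have h4 : 0 ≤ 3*(p-1)/4 * (1 - m x ^ 2) := by nlinarith
    exact mul_nonneg h4 h1
  have hGdiff : Differentiable ℝ G := fun x => (key x).differentiableAt
  have hmono : Monotone G := by
    apply monotone_of_deriv_nonneg hGdiff
    intro x
    rw [(key x).deriv]
    exact hgpos x
  -- decay bounds
  obtain ⟨C0, a0, ha0, hb0⟩ := hdec 0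
  obtain ⟨C1, a1, ha1, hb1⟩ := hdec 1
  obtain ⟨C2, a2, ha2, hb2⟩ := hdec 2
  have hi2 : iteratedDeriv 2 ψ = deriv (deriv ψ) := by
    rw [show (2:ℕ) = 1 + 1 from rfl, iteratedDeriv_succ, iteratedDeriv_one]
  simp only [iteratedDeriv_zero] at hb0
  simp only [iteratedDeriv_one] at hb1
  simp only [hi2] at hb2
  set a : ℝ := min a0 (min a1 a2) with hadef
  have ha : 0 < a := lt_min ha0 (lt_min ha1 ha2)
  set C : ℝ := max C0 (max C1 C2) with hCdef
  have hC0 : 0 ≤ C0 := by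
    have h := hb0 0
    simp only [abs_zero, mul_zero, neg_zero, Real.exp_zero, mul_one] at h
    exact le_trans (norm_nonneg _) h
  have hCnn : 0 ≤ C := le_trans hC0 (le_max_left _ _)
  have hexple : ∀ (b : ℝ), a ≤ b → ∀ x : ℝ, Real.exp (-b*|x|) ≤ Real.exp (-a*|x|) := by
    intro b hb x
    apply Real.exp_le_exp.mpr
    nlinarith [abs_nonneg x]
  have hn0 : ∀ x, ‖ψ x‖ ≤ C * Real.exp (-a*|x|) := fun x =>
    le_trans (hb0 x) (mul_le_mul (le_max_left _ _) (hexple a0 (min_le_left _ _) x)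
      (Real.exp_pos _).le hCnn)
  have hn1 : ∀ x, ‖deriv ψ x‖ ≤ C * Real.exp (-a*|x|) := fun x =>
    le_trans (hb1 x) (mul_le_mul ((le_max_left _ _).trans (le_max_right _ _))
      (hexple a1 ((min_le_right _ _).trans (min_le_left _ _)) x) (Real.exp_pos _).le hCnn)
  have hn2 : ∀ x, ‖deriv (deriv ψ) x‖ ≤ C * Real.exp (-a*|x|) := fun x =>
    le_trans (hb2 x) (mul_le_mul ((le_max_right _ _).trans (le_max_right _ _))
      (hexple a2 ((min_le_right _ _).trans (min_le_right _ _)) x) (Real.exp_pos _).le hCnn)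
  -- bound on G
  have hGb : ∀ x : ℝ, |G x| ≤ (2 + (p-1)/2) * (C * Real.exp (-a*|x|))^2 := by
    intro x
    have ht : 0 ≤ C * Real.exp (-a*|x|) := by positivity
    have h0 := hn0 x
    have h1 := hn1 x
    have h2 := hn2 x
    have hc1 : |(-(m x))| ≤ 1 := by rw [abs_neg]; exact hm1 x
    have hc2 : |m x / 2| ≤ 1/2 := by
      have habs : |m x / 2| = |m x| / 2 := by rw [_root_.abs_div]; norm_num
      rw [habs]
      linarith [hm1 x]
    have hc3 : |(p - 1) / 2 * (1 - m x ^ 2)| ≤ (p-1)/2 := by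
      have hnn : 0 ≤ (p - 1) / 2 * (1 - m x ^ 2) := by nlinarith [hm2 x]
      rw [_root_.abs_of_nonneg hnn]
      nlinarith [sq_nonneg (m x)]
    have hc4 : |m x ^ 3 / 2| ≤ 1/2 := by
      have habs : |m x ^ 3 / 2| = |m x| ^ 3 / 2 := by
        rw [_root_.abs_div, _root_.abs_pow]; norm_num
      have h3 : |m x| ^ 3 ≤ 1 := by
        calc |m x| ^ 3 ≤ 1 ^ 3 := pow_le_pow_left₀ (abs_nonneg _) (hm1 x) 3
          _ = 1 := one_pow 3
      rw [habs]
      linarith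
    have E1 := bnd hc1 (ψ x) (deriv (deriv ψ) x) h0 h2 ht
    have E2 := bnd hc2 (deriv ψ x) (deriv ψ x) h1 h1 ht
    have E3 := bnd hc3 (ψ x) (deriv ψ x) h0 h1 ht
    have E4 := bnd hc4 (ψ x) (ψ x) h0 h0 ht
    simp only [hGdef]
    refine le_trans (abs_add_le _ _) ?_
    refine le_trans (add_le_add (abs_add_le _ _) le_rfl) ?_
    refine le_trans (add_le_add (add_le_add (abs_add_le _ _) le_rfl) le_rfl) ?_
    linarith [E1, E2, E3, E4, pow_two (C * Real.exp (-a*|x|))]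
  -- G tends to 0 at ±∞
  have htend : ∀ l : Filter ℝ, Tendsto (fun x : ℝ => |x|) l atTop → Tendsto G l (𝓝 0) := by
    intro l hl
    have h1 : Tendsto (fun x : ℝ => -(a * |x|)) l atBot :=
      tendsto_neg_atTop_atBot.comp (hl.const_mul_atTop ha)
    have h2 : Tendsto (fun x : ℝ => Real.exp (-a * |x|)) l (𝓝 0) := by
      have h := Real.tendsto_exp_atBot.comp h1
      simpa only [Function.comp_def, ← neg_mul] using h
    have h3 : Tendsto (fun x : ℝ => (2 + (p-1)/2) * (C * Real.exp (-a*|x|))^2) l (𝓝 0) := by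
      have h := ((h2.const_mul C).pow 2).const_mul (2 + (p-1)/2)
      simpa using h
    exact squeeze_zero_norm (fun x => by rw [Real.norm_eq_abs]; exact hGb x) h3
  have hGtop : Tendsto G atTop (𝓝 0) := htend atTop tendsto_abs_atTop_atTop
  have hGbot : Tendsto G atBot (𝓝 0) := htend atBot tendsto_abs_atBot_atTop
  have hG0 : ∀ x, G x = 0 := fun x =>
    le_antisymm (hmono.ge_of_tendsto hGtop x) (hmono.le_of_tendsto hGbot x)
  -- hence ψ' = -m ψ
  have hrel : ∀ x : ℝ, deriv ψ x = -((m x : ℝ) : ℂ) * ψ x := by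
    intro x
    have hz : HasDerivAt G 0 x := by
      have hfun : G = fun _ => (0:ℝ) := funext hG0
      rw [hfun]
      exact hasDerivAt_const x 0
    have h0 := (key x).unique hz
    have hcpos : 0 < 3*(p-1)/4 * (1 - m x ^ 2) := by nlinarith [hm2 x, sq_nonneg (m x)]
    have hS : S x = 0 := by
      rcases mul_eq_zero.mp h0 with h | h
      · exact absurd h hcpos.ne'
      · exact h
    simp only [hSdef] at hS
    have hre : (deriv ψ x).re + m x * (ψ x).re = 0 := by
      have h2 : ((deriv ψ x).re + m x * (ψ x).re)^2 = 0 := by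
        nlinarith [sq_nonneg ((deriv ψ x).re + m x * (ψ x).re),
          sq_nonneg ((deriv ψ x).im + m x * (ψ x).im)]
      exact sq_eq_zero_iff.mp h2
    have him : (deriv ψ x).im + m x * (ψ x).im = 0 := by
      have h2 : ((deriv ψ x).im + m x * (ψ x).im)^2 = 0 := by
        nlinarith [sq_nonneg ((deriv ψ x).re + m x * (ψ x).re),
          sq_nonneg ((deriv ψ x).im + m x * (ψ x).im)]
      exact sq_eq_zero_iff.mp h2
    rw [Complex.ext_iff]
    constructor
    · simp only [Complex.neg_re, Complex.neg_im, Complex.mul_re, Complex.mul_im,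
        Complex.ofReal_re, Complex.ofReal_im, neg_zero, zero_mul, mul_zero, sub_zero,
        add_zero]
      linarith
    · simp only [Complex.neg_re, Complex.neg_im, Complex.mul_re, Complex.mul_im,
        Complex.ofReal_re, Complex.ofReal_im, neg_zero, zero_mul, mul_zero, sub_zero,
        add_zero, zero_add]
      linarith
  -- conclude pointwise vanishing
  funext x
  simp only [Pi.zero_apply]
  have hd0 : HasDerivAt ψ (deriv ψ x) x := (hdiff0 x).hasDerivAt
  have hR : ∀ y : ℝ, deriv (deriv ψ) y
      = ((m y ^ 2 - (p-1)/2 * (1 - m y ^ 2) : ℝ) : ℂ) * ψ y := by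
    intro y
    have hd0y : HasDerivAt ψ (deriv ψ y) y := (hdiff0 y).hasDerivAt
    have hd1y : HasDerivAt (deriv ψ) (deriv (deriv ψ) y) y := (hdiff1 y).hasDerivAt
    have hprod : HasDerivAt (fun z : ℝ => -((m z : ℝ) : ℂ) * ψ z)
        (-((((p-1)/2 * (1 - m y ^ 2) : ℝ)) : ℂ) * ψ y + -((m y : ℝ):ℂ) * deriv ψ y) y :=
      (((hm y).ofReal_comp).neg).mul hd0y
    have hd1' : HasDerivAt (fun z : ℝ => -((m z : ℝ):ℂ) * ψ z) (deriv (deriv ψ) y) y :=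
      hd1y.congr_of_eventuallyEq (Filter.Eventually.of_forall fun z => (hrel z).symm)
    have huniq := hd1'.unique hprod
    rw [huniq, hrel y]
    push_cast
    ring
  have hd2x : HasDerivAt (deriv (deriv ψ)) (deriv (deriv (deriv ψ)) x) x :=
    (hdiff2 x).hasDerivAt
  have hprod2 := ((((hm x).pow 2).sub
      (((hasDerivAt_const x (1:ℝ)).sub ((hm x).pow 2)).const_mul ((p-1)/2))).ofReal_comp).mul hd0
  have hd2' : HasDerivAt (fun z : ℝ => ((m z ^ 2 - (p-1)/2 * (1 - m z ^ 2) : ℝ):ℂ) * ψ z)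
      (deriv (deriv (deriv ψ)) x) x :=
    hd2x.congr_of_eventuallyEq (Filter.Eventually.of_forall fun z => (hR z).symm)
  have e3 := hd2'.unique hprod2
  have h3x := h3 x
  rw [e3, hrel x] at h3x
  set c : ℝ := 2 * m x * ((p-1)/2*(1 - m x ^2)) * (1 + (p-1)/2)
      - (m x ^2 - (p-1)/2*(1 - m x ^2)) * m x
      + (1 - p*((p+1)/2*(1 - m x ^2))) * m x with hcdef
  have hkey : (((c : ℝ) : ℂ) + Complex.I * lam) * ψ x = 0 := by
    rw [hcdef]
    simp only [Pi.sub_apply, Pi.pow_apply] at h3x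
    push_cast at h3x ⊢
    linear_combination h3x
  rcases mul_eq_zero.mp hkey with h | h
  · exfalso
    have himg := congrArg Complex.im h
    simp [Complex.add_im, Complex.mul_im] at himg
    exact hlam himg
  · exact h
end
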